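/- Let i, j ∈ V with i ≠ j. Then the K-vector space V_{ij} = span_K {σ_i^k(t_j) : k ∈ ℤ} has dimension 1 + Σ_{e ∈ E with γ e i ≠ 0} |γ e j|. (Equivalently, the entry a_{ij} = 1 − dim_K V_{ij} of the generalized Cartan matrix associated to the TGW datum (R_E, σ^Γ, t^Γ) equals −Σ_{e ∈ E with γ e i ≠ 0} |γ e j|.) -/

import Mathlib

open MvPolynomial

/-- The defining property of the incidence matrix of a multiquiver: every row has
at most one positive and at most one negative entry. -/
def CondM {V E : Type*} (γ : E → V → ℤ) : Prop :=
  ∀ e : E, (∀ v w : V, 0 < γ e v → 0 < γ e w → v = w) ∧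
    (∀ v w : V, γ e v < 0 → γ e w < 0 → v = w)

/-- `u_{ev} = u_e(u_e+1)⋯(u_e+c−1)` if `c = γ e v > 0`,
`(u_e−1)(u_e−2)⋯(u_e−|c|)` if `c < 0`, and `1` if `c = 0`. -/
noncomputable def uev (K : Type*) [Field K] {E : Type*} (e : E) (c : ℤ) :
    MvPolynomial E K :=
  if 0 < c then ∏ k ∈ Finset.range c.toNat, (X e + C (k : K))
  else ∏ m ∈ Finset.range (-c).toNat, (X e - C ((m : K) + 1))

/-- `t_v = ∏_{e∈E} u_{ev}`. -/
noncomputable def tGamma (K : Type*) [Field K] {V E : Type*} [Fintype E]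
    (γ : E → V → ℤ) (v : V) : MvPolynomial E K :=
  ∏ e : E, uev K e (γ e v)

/-!
Write `u` for the variables and `d = Σ_{γ e i ≠ 0} |γ e j|`. Since `σ_i` translates `u` by
`-γ_i`, the orbit `k ↦ σ_i^k(t_j)` is the polynomial `Q(T) = t_j(u - T γ_i) ∈ R_E[T]` evaluated
at `T = k`, and `Q` is a product of nonzero factors of `T`-degree `1` (when `γ e i ≠ 0`) or `0`,
so `deg Q = d`. Forward differences then give `(σ_i - 1)^(d+1) t_j = 0` and
`(σ_i - 1)^d t_j = d! · lead(Q) ≠ 0`. Finally, if `g - 1` is nilpotent of exact order `d + 1`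
on `v`, the `g`-orbit of `v` spans the `(d+1)`-dimensional space with basis
`v, (g - 1) v, …, (g - 1)^d v`.
-/

open fwdDiff

section ForwardDifference

variable {R M : Type*} [Semiring R] [AddCommGroup M] [Module R M]

theorem fwdDiff_iter_eq_sub_one_pow_apply {D : Type*} [AddCommMonoid D] (f : Module.End R M)
    {g : D → M} {h : D} (hg : ∀ x, g (x + h) = f (g x)) (m : ℕ) :
    (Δ_[h])^[m] g = fun x => ((f - 1) ^ m) (g x) := by
  induction m with
  | zero => rfl
  | succ m ih =>
    rw [Function.iterate_succ_apply', ih]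
    funext x
    simp only [fwdDiff, hg, ← map_sub, pow_succ, Module.End.mul_apply, LinearMap.sub_apply,
      Module.End.one_apply]

theorem fwdDiff_iter_comp_addMonoidHom {D D' G : Type*} [AddCommMonoid D] [AddCommMonoid D']
    [AddCommGroup G] (c : D →+ D') (h : D) (φ : D' → G) (m : ℕ) :
    (Δ_[h])^[m] (φ ∘ c) = ((Δ_[c h])^[m] φ) ∘ c := by
  have hc : Function.Semiconj (· ∘ c) Δ_[c h] (Δ_[h] : (D → G) → D → G) := fun ψ => by
    funext x
    simp [fwdDiff, map_add]
  exact (hc.iterate_right m φ).symm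

end ForwardDifference

section Nilpotent

variable {K M : Type*} [Field K] [AddCommGroup M] [Module K M]

theorem Module.End.linearIndependent_pow_apply (N : Module.End K M) {v : M} {d : ℕ}
    (hv : (N ^ (d + 1)) v = 0) (hv' : (N ^ d) v ≠ 0) :
    LinearIndependent K fun m : Fin (d + 1) => (N ^ (m : ℕ)) v := by
  induction d generalizing v with
  | zero => exact linearIndependent_unique_iff (ι := Fin 1) |>.mpr (by simpa using hv')
  | succ d ih =>
    rw [linearIndependent_finSucc]
    constructor
    · have hN : ∀ n : ℕ, (N ^ n) (N v) = (N ^ (n + 1)) v := fun n => by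
        rw [pow_succ, Module.End.mul_apply]
      convert ih (v := N v) (by rwa [hN]) (by rwa [hN]) using 1
      funext m
      simp [Fin.tail, hN]
    · intro hmem
      apply hv'
      have hmap := Submodule.apply_mem_span_image_of_mem_span (N ^ (d + 1)) hmem
      rwa [← Set.range_comp, (Submodule.span_eq_bot (R := K)).mpr, Submodule.mem_bot] at hmap
      rintro _ ⟨m, rfl⟩
      simp only [Function.comp_apply, Fin.tail, ← Module.End.mul_apply, ← pow_add]
      have hexp : d + 1 + ((m.succ : Fin (d + 2)) : ℕ) = m + (d + 1 + 1) := by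
        simp only [Fin.val_succ]
        omega
      rw [hexp, pow_add, Module.End.mul_apply, hv, map_zero]

end Nilpotent

section GroupOrbit

variable {K M G : Type*} [Field K] [AddCommGroup M] [Module K M] [Group G]
  [DistribMulAction G M] [SMulCommClass G K M]

theorem Submodule.zpow_smul_mem {W : Submodule K M} [FiniteDimensional K W] {g : G}
    (hW : ∀ w ∈ W, g • w ∈ W) (k : ℤ) {w : M} (hw : w ∈ W) : g ^ k • w ∈ W := by
  have hinv : ∀ w ∈ W, g⁻¹ • w ∈ W := by
    intro w hw
    let gW : W →ₗ[K] W := (DistribSMul.toLinearMap K M g).restrict hW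
    have hinj : Function.Injective gW := fun x y hxy =>
      Subtype.ext (smul_left_cancel g (congrArg Subtype.val hxy))
    obtain ⟨w', hw'⟩ := LinearMap.injective_iff_surjective.mp hinj ⟨w, hw⟩
    have hgw' : g • (w' : M) = w := congrArg Subtype.val hw'
    rw [← hgw', inv_smul_smul]
    exact w'.2
  induction k using Int.induction_on generalizing w with
  | zero => simpa using hw
  | succ k ih => rw [zpow_add_one, mul_smul]; exact ih (hW w hw)
  | pred k ih => rw [zpow_sub_one, mul_smul]; exact ih (hinv w hw)

theorem zpow_smul_mem_span_range_pow_apply {g : G} {v : M} {d : ℕ}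
    (hv : ((DistribSMul.toLinearMap K M g - 1) ^ (d + 1)) v = 0) (k : ℤ) :
    g ^ k • v ∈ Submodule.span K (Set.range fun m : Fin (d + 1) =>
      ((DistribSMul.toLinearMap K M g - 1) ^ (m : ℕ)) v) := by
  set N := DistribSMul.toLinearMap K M g - 1
  set W := Submodule.span K (Set.range fun m : Fin (d + 1) => (N ^ (m : ℕ)) v)
  have hN : W ≤ W.comap N := by
    refine Submodule.span_le.mpr ?_
    rintro _ ⟨m, rfl⟩
    rw [SetLike.mem_coe, Submodule.mem_comap, ← Module.End.mul_apply, ← pow_succ']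
    rcases Nat.lt_or_ge ((m : ℕ) + 1) (d + 1) with h | h
    · exact Submodule.subset_span ⟨⟨(m : ℕ) + 1, h⟩, rfl⟩
    · rw [show (m : ℕ) + 1 = d + 1 by omega, hv]
      exact W.zero_mem
  have hg : ∀ w ∈ W, g • w ∈ W := fun w hw => by
    simpa [N] using W.add_mem hw (hN hw)
  have : FiniteDimensional K W := FiniteDimensional.span_of_finite K (Set.finite_range _)
  exact Submodule.zpow_smul_mem hg k (Submodule.subset_span ⟨0, by simp⟩)

theorem pow_apply_mem_span_range_zpow_smul (g : G) (v : M) (n : ℕ) :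
    ((DistribSMul.toLinearMap K M g - 1) ^ n) v ∈
      Submodule.span K (Set.range fun k : ℤ => g ^ k • v) := by
  set S := Submodule.span K (Set.range fun k : ℤ => g ^ k • v)
  have hN : S ≤ S.comap (DistribSMul.toLinearMap K M g - 1) := by
    refine Submodule.span_le.mpr ?_
    rintro _ ⟨k, rfl⟩
    have hgk : g • g ^ k • v ∈ S :=
      Submodule.subset_span ⟨1 + k, by simp [zpow_one_add, mul_smul]⟩
    simpa using S.sub_mem hgk (Submodule.subset_span ⟨k, rfl⟩)
  induction n with
  | zero => exact Submodule.subset_span ⟨0, by simp⟩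
  | succ n ih => rw [pow_succ', Module.End.mul_apply]; exact hN ih

theorem span_range_zpow_smul_eq {g : G} {v : M} {d : ℕ}
    (hv : ((DistribSMul.toLinearMap K M g - 1) ^ (d + 1)) v = 0) :
    Submodule.span K (Set.range fun k : ℤ => g ^ k • v) =
      Submodule.span K (Set.range fun m : Fin (d + 1) =>
        ((DistribSMul.toLinearMap K M g - 1) ^ (m : ℕ)) v) :=
  le_antisymm
    (Submodule.span_le.mpr <| Set.range_subset_iff.mpr <| zpow_smul_mem_span_range_pow_apply hv)
    (Submodule.span_le.mpr <| Set.range_subset_iff.mpr fun m =>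
      pow_apply_mem_span_range_zpow_smul g v m)

theorem finrank_span_range_zpow_smul {g : G} {v : M} {d : ℕ}
    (hv : ((DistribSMul.toLinearMap K M g - 1) ^ (d + 1)) v = 0)
    (hv' : ((DistribSMul.toLinearMap K M g - 1) ^ d) v ≠ 0) :
    Module.finrank K (Submodule.span K (Set.range fun k : ℤ => g ^ k • v)) = d + 1 := by
  rw [span_range_zpow_smul_eq hv,
    finrank_span_eq_card (Module.End.linearIndependent_pow_apply _ hv hv'), Fintype.card_fin]

end GroupOrbit

theorem MvPolynomial.X_add_C_ne_zero {K E : Type*} [Field K] (e : E) (b : K) :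
    (X e + C b : MvPolynomial E K) ≠ 0 := fun h => by
  simpa using congrArg (MvPolynomial.eval fun _ => 1 - b) h

theorem uev_eq_prod {K E : Type*} [Field K] (e : E) (c : ℤ) :
    uev K e c = ∏ k ∈ Finset.range c.natAbs,
      (X e + C (if 0 < c then (k : K) else -((k : K) + 1))) := by
  unfold uev
  split_ifs with h
  · rw [show c.toNat = c.natAbs by omega]
  · rw [show (-c).toNat = c.natAbs by omega]
    simp [sub_eq_add_neg]

section LineSubstitution

variable {K E : Type*} [Field K] (a : E → ℤ)

noncomputable def lineSubst : MvPolynomial E K →ₐ[K] Polynomial (MvPolynomial E K) :=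
  aeval fun e => Polynomial.C (X e) - Polynomial.C (C (a e : K)) * Polynomial.X

theorem pow_apply_eq_eval_lineSubst {σ : MvPolynomial E K ≃ₐ[K] MvPolynomial E K}
    (hσ : ∀ e, σ (X e) = X e - C (a e : K)) (k : ℕ) (p : MvPolynomial E K) :
    (σ ^ k) p = (lineSubst a p).eval (k : MvPolynomial E K) := by
  have hX : ∀ e, (σ ^ k) (X e) = X e - C (k * a e : K) := fun e => by
    induction k with
    | zero => simp
    | succ k ih =>
      rw [pow_succ', AlgEquiv.mul_apply, ih, map_sub, hσ, show σ (C _) = C _ from σ.commutes _,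
        Nat.cast_succ, add_mul, one_mul, C_add]
      ring
  have hhom : (σ ^ k).toAlgHom =
      ((Polynomial.aeval (k : MvPolynomial E K)).restrictScalars K).comp (lineSubst a) :=
    algHom_ext fun e => by
      simp only [AlgEquiv.coe_toAlgHom, hX, C_mul, map_natCast, map_intCast, lineSubst,
        AlgHom.coe_comp, AlgHom.coe_restrictScalars', Polynomial.coe_aeval_eq_eval,
        Function.comp_apply, aeval_X, Polynomial.eval_sub, Polynomial.eval_C, Polynomial.eval_mul,
        Polynomial.eval_intCast, Polynomial.eval_X, sub_right_inj]
      ring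
  exact DFunLike.congr_fun hhom p

theorem sub_one_pow_apply_eq_fwdDiff_iter_eval {σ : MvPolynomial E K ≃ₐ[K] MvPolynomial E K}
    (hσ : ∀ e, σ (X e) = X e - C (a e : K)) (p : MvPolynomial E K) (m : ℕ) :
    ((DistribSMul.toLinearMap K (MvPolynomial E K) σ - 1) ^ m) p =
      (Δ_[1])^[m] (lineSubst a p).eval 0 := by
  have horbit : (fun k : ℕ => (σ ^ k) p) =
      (lineSubst a p).eval ∘ Nat.castAddMonoidHom (MvPolynomial E K) :=
    funext fun k => pow_apply_eq_eval_lineSubst a hσ k p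
  have hΔ := congrFun (fwdDiff_iter_eq_sub_one_pow_apply (DistribSMul.toLinearMap K _ σ)
    (g := fun k : ℕ => (σ ^ k) p) (h := 1) (fun k => by simp [pow_succ']) m) 0
  rw [horbit, fwdDiff_iter_comp_addMonoidHom] at hΔ
  simpa using hΔ.symm

theorem lineSubst_X_add_C (e : E) (b : K) :
    lineSubst a (X e + C b) =
      Polynomial.C (C (-a e : K)) * Polynomial.X + Polynomial.C (X e + C b) := by
  simp only [lineSubst, map_add, aeval_X, aeval_C, Polynomial.algebraMap_apply, algebraMap_eq,
    C_neg, Polynomial.C_neg]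
  ring

theorem lineSubst_X_add_C_ne_zero (e : E) (b : K) : lineSubst a (X e + C b) ≠ 0 := fun h =>
  X_add_C_ne_zero e b (by simpa [lineSubst_X_add_C] using congrArg (Polynomial.coeff · 0) h)

theorem lineSubst_uev_ne_zero (e : E) (c : ℤ) : lineSubst a (uev K e c) ≠ 0 := by
  rw [uev_eq_prod, map_prod]
  exact Finset.prod_ne_zero_iff.mpr fun k _ => lineSubst_X_add_C_ne_zero a e _

theorem lineSubst_tGamma_ne_zero [Fintype E] {V : Type*} (γ : E → V → ℤ) (j : V) :
    lineSubst a (tGamma K γ j) ≠ 0 := by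
  rw [tGamma, map_prod]
  exact Finset.prod_ne_zero_iff.mpr fun e _ => lineSubst_uev_ne_zero a e _

variable [CharZero K]

theorem natDegree_lineSubst_X_add_C (e : E) (b : K) :
    (lineSubst a (X e + C b)).natDegree = if a e = 0 then 0 else 1 := by
  rw [lineSubst_X_add_C]
  split_ifs with h
  · simp [h]
  · exact Polynomial.natDegree_linear (by simpa using h)

theorem natDegree_lineSubst_uev (e : E) (c : ℤ) :
    (lineSubst a (uev K e c)).natDegree = if a e ≠ 0 then c.natAbs else 0 := by
  rw [uev_eq_prod, map_prod,
    Polynomial.natDegree_prod _ _ fun k _ => lineSubst_X_add_C_ne_zero a e _]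
  simp_rw [natDegree_lineSubst_X_add_C]
  split_ifs <;> simp_all

theorem natDegree_lineSubst_tGamma [Fintype E] {V : Type*} (γ : E → V → ℤ) (j : V) :
    (lineSubst a (tGamma K γ j)).natDegree =
      ∑ e ∈ Finset.univ.filter (fun e => a e ≠ 0), (γ e j).natAbs := by
  rw [tGamma, map_prod, Polynomial.natDegree_prod _ _ fun e _ => lineSubst_uev_ne_zero a e _,
    Finset.sum_filter]
  simp_rw [natDegree_lineSubst_uev]

end LineSubstitution

theorem dim_Vij {K V E : Type*} [Field K] [CharZero K] [Fintype E]
    (γ : E → V → ℤ)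
    (σ : V → (MvPolynomial E K ≃ₐ[K] MvPolynomial E K))
    (hσ : ∀ (v : V) (e : E), σ v (X e) = X e - C ((γ e v : ℤ) : K))
    (i j : V) :
    Module.finrank K
        (Submodule.span K (Set.range fun k : ℤ => (σ i ^ k) (tGamma K γ j))) =
      1 + ∑ e ∈ Finset.univ.filter (fun e : E => γ e i ≠ 0), (γ e j).natAbs := by
  set Q := lineSubst (K := K) (fun e => γ e i) (tGamma K γ j)
  have hΔ := sub_one_pow_apply_eq_fwdDiff_iter_eval _ (hσ i) (tGamma K γ j)
  rw [add_comm, ← natDegree_lineSubst_tGamma (K := K) (fun e => γ e i)]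
  refine finrank_span_range_zpow_smul (g := σ i) ?_ ?_
  · rw [hΔ, Q.fwdDiff_iter_degree_add_one_eq_zero, Pi.zero_apply]
  · rw [hΔ, Q.fwdDiff_iter_degree_eq_factorial]
    simpa [Nat.factorial_ne_zero] using
      lineSubst_tGamma_ne_zero (K := K) (fun e => γ e i) γ j
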